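/- For every integer M ≥ 1, the value g(M) = (4M²/π) sin²(π/(4M)) satisfies 2/π ≤ g(M) < π/4, with g(1) = 2/π. -/

import Mathlib

/-! Since `sin` is concave on `[0, π]` and vanishes at `0`, `sin (x / t) ≥ sin x / t` for `t ≥ 1`;
with `x = π / 4` this gives `g(M) ≥ g(1) = 2/π`. The strict upper bound is `sin² x < x²` for `x ≠ 0`. -/

open Real

noncomputable def gainFactor (t : ℝ) : ℝ := 4 * t ^ 2 / π * sin (π / (4 * t)) ^ 2

lemma sin_div_le_sin_div {x t : ℝ} (hx₀ : 0 ≤ x) (hxπ : x ≤ π) (ht : 1 ≤ t) :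
    sin x / t ≤ sin (x / t) := by
  have ht₀ : 0 < t := by linarith
  have hw : 1 / t ≤ 1 := (div_le_one ht₀).mpr ht
  have hconc := strictConcaveOn_sin_Icc.concaveOn.2 ⟨le_rfl, pi_pos.le⟩ ⟨hx₀, hxπ⟩
    (sub_nonneg.mpr hw) (by positivity) (sub_add_cancel 1 (1 / t))
  simpa only [smul_eq_mul, sin_zero, mul_zero, zero_add, one_div, div_eq_inv_mul, mul_one] using hconc

lemma gainFactor_one : gainFactor 1 = 2 / π := by
  have hsq : √2 ^ 2 = 2 := sq_sqrt zero_le_two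
  rw [gainFactor, mul_one, sin_pi_div_four, div_pow, hsq]
  ring

lemma gainFactor_one_le {t : ℝ} (ht : 1 ≤ t) : gainFactor 1 ≤ gainFactor t := by
  have ht₀ : 0 < t := by linarith
  have hsin : sin (π / 4) / t ≤ sin (π / (4 * t)) := by
    rw [← div_div]
    exact sin_div_le_sin_div (by positivity) (by linarith [pi_pos]) ht
  have hsin₀ : 0 ≤ sin (π / 4) / t := by
    rw [sin_pi_div_four]; positivity
  calc gainFactor 1 = 4 * t ^ 2 / π * (sin (π / 4) / t) ^ 2 := by
        rw [gainFactor]; field_simp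
    _ ≤ gainFactor t := by
        rw [gainFactor]; gcongr

lemma gainFactor_lt_pi_div_four {t : ℝ} (ht : t ≠ 0) : gainFactor t < π / 4 := by
  calc gainFactor t < 4 * t ^ 2 / π * (π / (4 * t)) ^ 2 := by
        rw [gainFactor]
        exact mul_lt_mul_of_pos_left (sin_sq_lt_sq (by positivity)) (by positivity)
    _ = π / 4 := by field_simp

theorem gain_factor_bounds :
    (∀ M : ℕ, 1 ≤ M →
      2/π ≤ (4 * (M:ℝ)^2 / π) * Real.sin (π / (4*(M:ℝ)))^2 ∧
      (4 * (M:ℝ)^2 / π) * Real.sin (π / (4*(M:ℝ)))^2 < π/4) ∧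
    (4 * (1:ℝ)^2 / π) * Real.sin (π / (4*(1:ℝ)))^2 = 2/π := by
  refine ⟨fun M hM => ?_, gainFactor_one⟩
  have hM' : (1 : ℝ) ≤ M := by exact_mod_cast hM
  exact ⟨gainFactor_one ▸ gainFactor_one_le hM', gainFactor_lt_pi_div_four (by positivity)⟩
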